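/- arXiv:cond-mat/0204055 — 4 statements merged into one kernel-verified Lean document; each statement's English description precedes it below -/
import Mathlib

section
/- Fortuin–Kasteleyn expansion: let G = (V, E) be a finite graph, K : E → ℝ a coupling function, and q ≥ 1 a natural number. Then Σ_{σ : V → {0,…,q−1}} Π_{ij ∈ E} exp(K(ij)·δ_{σ(i),σ(j)}) = Σ_{F ⊆ E} q^{c(F)} · Π_{ij ∈ F} (exp(K(ij)) − 1), where δ_{a,b} equals 1 if a = b and 0 otherwise, the outer sum on the right runs over all subsets F of E, and c(F) is the number of connected components of the spanning subgraph (V, F) (with the empty product equal to 1). -/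
/-! Since `δ_e ∈ {0, 1}`, `exp (K e δ_e) = 1 + (exp (K e) - 1) δ_e`. Expanding the product over the
edges gives `Σ_F Π_{e ∈ F} (exp (K e) - 1) · Σ_σ Π_{e ∈ F} δ_e`, and the inner sum counts the
colourings that are constant along every edge of `F`, i.e. the colourings of the components of
`(V, F)`: there are `q ^ c(F)` of them. -/

open scoped Classical

noncomputable section

variable {V : Type*} [Fintype V] [DecidableEq V]

/-- The number of connected components of the spanning subgraph `(V, F)`. -/
def compCount (F : Finset (Sym2 V)) : ℕ :=
  Nat.card (SimpleGraph.fromEdgeSet (↑F : Set (Sym2 V))).ConnectedComponent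

/-- Kronecker delta `δ_{σ(i), σ(j)}` for the unordered pair (edge) `e = ij`:
it equals `1` if `σ` takes the same value on the two endpoints of `e` and `0` otherwise. -/
def kron {q : ℕ} (σ : V → Fin q) (e : Sym2 V) : ℝ :=
  if ∀ i ∈ e, ∀ j ∈ e, σ i = σ j then 1 else 0

namespace SimpleGraph

section

variable {V α : Type*} {G : SimpleGraph V}

theorem Reachable.eq_of_forall_adj {f : V → α} (hf : ∀ v w, G.Adj v w → f v = f w)
    {v w : V} (h : G.Reachable v w) : f v = f w := by
  obtain ⟨p⟩ := h
  induction p with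
  | nil => rfl
  | cons hadj _ ih => exact (hf _ _ hadj).trans ih

variable (G) in
def ConnectedComponent.liftEquiv :
    {f : V → α // ∀ v w, G.Adj v w → f v = f w} ≃ (G.ConnectedComponent → α) where
  toFun f := ConnectedComponent.lift f.1 fun _ _ p _ => p.reachable.eq_of_forall_adj f.2
  invFun g := ⟨fun v => g (G.connectedComponentMk v),
    fun _ _ h => congrArg g (ConnectedComponent.connectedComponentMk_eq_of_adj h)⟩
  left_inv _ := rfl
  right_inv _ := funext (ConnectedComponent.ind fun _ => rfl)

theorem forall_fromEdgeSet_adj_iff {s : Set (Sym2 V)} {f : V → α} :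
    (∀ v w, (fromEdgeSet s).Adj v w → f v = f w) ↔ ∀ e ∈ s, ∀ i ∈ e, ∀ j ∈ e, f i = f j := by
  constructor
  · intro h e he i hi j hj
    by_cases hij : i = j
    · rw [hij]
    · rw [(Sym2.mem_and_mem_iff hij).mp ⟨hi, hj⟩] at he
      exact h i j ⟨he, hij⟩
  · rintro h v w ⟨he, -⟩
    exact h _ he v (Sym2.mem_mk_left v w) w (Sym2.mem_mk_right v w)

end

end SimpleGraph

open SimpleGraph

theorem exp_mul_kron (k : ℝ) {q : ℕ} (σ : V → Fin q) (e : Sym2 V) :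
    Real.exp (k * kron σ e) = (Real.exp k - 1) * kron σ e + 1 := by
  unfold kron
  split_ifs <;> simp

theorem prod_kron_eq_ite (F : Finset (Sym2 V)) {q : ℕ} (σ : V → Fin q) :
    ∏ e ∈ F, kron σ e =
      if ∀ v w, (fromEdgeSet (F : Set (Sym2 V))).Adj v w → σ v = σ w then 1 else 0 := by
  simp only [kron, Finset.prod_boole, forall_fromEdgeSet_adj_iff, Finset.mem_coe]
  congr

theorem sum_prod_kron (F : Finset (Sym2 V)) (q : ℕ) :
    ∑ σ : V → Fin q, ∏ e ∈ F, kron σ e = (q : ℝ) ^ compCount F := by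
  simp only [prod_kron_eq_ite, Finset.sum_boole]
  rw [← Fintype.card_subtype, Fintype.card_congr (ConnectedComponent.liftEquiv _), Fintype.card_fun,
    Fintype.card_fin, compCount, Nat.card_eq_fintype_card]
  push_cast
  rfl

theorem fortuin_kasteleyn_general (G : SimpleGraph V) [DecidableRel G.Adj]
    (K : Sym2 V → ℝ) (q : ℕ) :
    ∑ σ : V → Fin q, ∏ e ∈ G.edgeFinset, Real.exp (K e * kron σ e) =
      ∑ F ∈ G.edgeFinset.powerset,
        (q : ℝ) ^ compCount F * ∏ e ∈ F, (Real.exp (K e) - 1) := by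
  calc ∑ σ : V → Fin q, ∏ e ∈ G.edgeFinset, Real.exp (K e * kron σ e)
      = ∑ σ : V → Fin q, ∑ F ∈ G.edgeFinset.powerset,
          (∏ e ∈ F, (Real.exp (K e) - 1) * kron σ e) * ∏ _e ∈ G.edgeFinset \ F, 1 := by
        simp only [exp_mul_kron, Finset.prod_add]
    _ = ∑ F ∈ G.edgeFinset.powerset,
          (∑ σ : V → Fin q, ∏ e ∈ F, kron σ e) * ∏ e ∈ F, (Real.exp (K e) - 1) := by
        rw [Finset.sum_comm]
        refine Finset.sum_congr rfl fun F _ => ?_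
        rw [Finset.sum_mul]
        refine Finset.sum_congr rfl fun σ _ => ?_
        rw [Finset.prod_const_one, mul_one, Finset.prod_mul_distrib, mul_comm]
    _ = _ := by simp only [sum_prod_kron]

/-- Fortuin–Kasteleyn expansion: for a finite graph `G = (V, E)` with couplings
`K : E → ℝ` and `q ≥ 1`,
`Σ_σ Π_{ij ∈ E} exp(K(ij) δ_{σ(i)σ(j)}) = Σ_{F ⊆ E} q^{c(F)} Π_{ij ∈ F} (exp(K(ij)) - 1)`. -/
theorem fortuin_kasteleyn (G : SimpleGraph V) [DecidableRel G.Adj]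
    (K : Sym2 V → ℝ) (q : ℕ) (hq : 1 ≤ q) :
    ∑ σ : V → Fin q, ∏ e ∈ G.edgeFinset, Real.exp (K e * kron σ e) =
      ∑ F ∈ G.edgeFinset.powerset,
        (q : ℝ) ^ compCount F * ∏ e ∈ F, (Real.exp (K e) - 1) :=
  fortuin_kasteleyn_general G K q
end
end

section
/- Connectivity of minimizers: let G = (V, E) be a finite graph with edge weights w : E → ℝ, 0 ≤ w(e) for all e, let x ∈ V, let F' be a set of edges of G − x maximizing f_{G−x}, and let P_G(F') be the partition of V whose classes are the vertex sets of the connected components of (V∖{x}, F') together with {x}. Then any 𝒲 ⊆ P_G(F') containing {x} that minimizes |𝒲| − 1 − w(E(𝒲)) over subsets of P_G(F') containing {x} has the property that the union ∪_{X∈𝒲} X induces a connected subgraph of G. -/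
/-!
Split `𝒲` into the classes that `x` reaches inside `⋃ 𝒲` and the remaining subfamily `𝒱`.
If `𝒱` were nonempty, no edge of `G` would join it to `𝒲 \ 𝒱`, so `E(𝒲) = E(𝒲 \ 𝒱) ⊔ E(𝒱)`
and minimality of `𝒲` against `𝒲 \ 𝒱` gives `|𝒱| ≤ w(E(𝒱))`. But `E(𝒱)` avoids `x` and only
joins the `|𝒱|` components of `F'` forming `𝒱`, so adding it to `F'` costs at most `|𝒱| - 1`
components while gaining `w(E(𝒱))`: this strictly increases `f_{G-x}`, contradicting the
maximality of `F'`.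
-/

open scoped Classical

noncomputable section

variable {V : Type*} [Fintype V] [DecidableEq V]

/-- The number of connected components of the spanning subgraph on the vertex set `S`
determined by the edge set `A`. -/
def compCountOn (S : Set V) (A : Finset (Sym2 V)) : ℕ :=
  Nat.card ((SimpleGraph.fromEdgeSet (↑A : Set (Sym2 V))).induce S).ConnectedComponent

/-- `f_{G-x}(A)` : the Potts objective for the graph on the vertex set `S = V \ {x}`. -/
def pottsFunOn (S : Set V) (w : Sym2 V → ℝ) (A : Finset (Sym2 V)) : ℝ :=
  (compCountOn S A : ℝ) + ∑ e ∈ A, w e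

/-- `E(𝒲)`: the set of edges of `G` joining vertices belonging to two different members
of the collection `𝒲` of vertex sets. -/
def crossEdges (G : SimpleGraph V) [DecidableRel G.Adj] (𝒲 : Finset (Finset V)) :
    Finset (Sym2 V) :=
  G.edgeFinset.filter
    (fun e => ∃ X ∈ 𝒲, ∃ Y ∈ 𝒲, X ≠ Y ∧ ∃ i j, e = s(i, j) ∧ i ∈ X ∧ j ∈ Y)

/-- The partition of `V` into the vertex sets of the connected components of the
spanning graph `(V, A)`.  When the edges of `A` avoid `x`, this is exactly
`P_G(A)`: the components of `(V \ {x}, A)` together with the singleton `{x}`. -/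
def compPartition (A : Finset (Sym2 V)) : Finset (Finset V) :=
  Finset.univ.image fun v : V =>
    Finset.univ.filter fun u =>
      (SimpleGraph.fromEdgeSet (↑A : Set (Sym2 V))).Reachable u v

namespace SimpleGraph

variable {α : Type*} {H H' : SimpleGraph α} {D : Set α}

theorem Reachable.of_disjoint_supp (hD : ∀ a b, H'.Adj a b → H.Adj a b ∨ a ∈ D ∧ b ∈ D)
    {u v : α} (huv : H'.Reachable u v) (hu : Disjoint (H.connectedComponentMk u).supp D) :
    H.Reachable u v := by
  obtain ⟨p⟩ := huv
  induction p with
  | nil => rfl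
  | @cons a b _ hab _ ih =>
    rcases hD a b hab with hab | ⟨ha, -⟩
    · rw [ConnectedComponent.sound hab.reachable] at hu
      exact hab.reachable.trans (ih hu)
    · exact (Set.disjoint_left.1 hu rfl ha).elim

/-- Adding edges inside `D` merges only components meeting `D`, and at least one of them
survives. -/
theorem card_connectedComponent_add_one_le [Finite α] (hle : H ≤ H')
    (hD : ∀ a b, H'.Adj a b → H.Adj a b ∨ a ∈ D ∧ b ∈ D) (hne : D.Nonempty) :
    Nat.card H.ConnectedComponent + 1 ≤
      Nat.card H'.ConnectedComponent + (H.connectedComponentMk '' D).ncard := by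
  set M := H.connectedComponentMk '' D
  set φ := ConnectedComponent.map (Hom.ofLE hle)
  have hfiber : ∀ c ∉ M, ∀ c', φ c = φ c' → c = c' := by
    intro c hc c' hcc'
    induction c using ConnectedComponent.ind with | h u => ?_
    induction c' using ConnectedComponent.ind with | h u' => ?_
    simp only [φ, ConnectedComponent.map_mk, Hom.ofLE_apply, ConnectedComponent.eq] at hcc'
    refine ConnectedComponent.sound (hcc'.of_disjoint_supp hD (Set.disjoint_left.2 ?_))
    intro z hz hzD
    exact hc ⟨z, hzD, hz⟩
  have hinj : Set.InjOn φ Mᶜ := fun c hc c' _ => hfiber c hc c'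
  have hdisj : Disjoint (φ '' Mᶜ) (φ '' M) := by
    rw [Set.disjoint_left]
    rintro - ⟨c, hc, rfl⟩ ⟨c', hc', hcc'⟩
    exact hc (hfiber c hc c' hcc'.symm ▸ hc')
  have hpos : 0 < (φ '' M).ncard := ((hne.image _).image _).ncard_pos
  calc Nat.card H.ConnectedComponent + 1
      = Mᶜ.ncard + M.ncard + 1 := by rw [add_comm Mᶜ.ncard, Set.ncard_add_ncard_compl]
    _ ≤ (φ '' Mᶜ).ncard + (φ '' M).ncard + M.ncard := by rw [hinj.ncard_image]; omega
    _ = (φ '' Mᶜ ∪ φ '' M).ncard + M.ncard := by rw [Set.ncard_union_eq hdisj]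
    _ ≤ Nat.card H'.ConnectedComponent + M.ncard := by grw [Set.ncard_le_card]

theorem reachable_induce_iff_of_closed {s : Set α} (hs : ∀ a b, H.Adj a b → a ∈ s → b ∈ s)
    {a b : s} : (H.induce s).Reachable a b ↔ H.Reachable a b := by
  refine ⟨fun h => h.map (Embedding.induce s).toHom, fun ⟨p⟩ => ?_⟩
  have hsupp : ∀ {u v : α} (q : H.Walk u v), u ∈ s → ∀ y ∈ q.support, y ∈ s := by
    intro u v q hu
    induction q with
    | nil => simpa using hu
    | cons hadj _ ih => simpa [hu] using ih (hs _ _ hadj hu)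
  exact (p.induce s (hsupp p a.2)).reachable

theorem reachable_induce_ne_iff_of_isIsolated {x : α} (hx : H.IsIsolated x)
    {a b : {v : α | v ≠ x}} : (H.induce {v | v ≠ x}).Reachable a b ↔ H.Reachable a b := by
  refine reachable_induce_iff_of_closed fun u v huv _ => ?_
  rintro rfl
  exact hx u huv.symm

theorem isIsolated_fromEdgeSet {s : Set (Sym2 α)} {x : α} (hs : ∀ e ∈ s, x ∉ e) :
    (fromEdgeSet s).IsIsolated x :=
  fun _ hxy => hs _ ((fromEdgeSet_adj _).1 hxy).1 (Sym2.mem_mk_left _ _)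

section

variable [DecidableEq α]

theorem induce_sup_connected_of_forall_exists_adj {G : SimpleGraph α} {𝒲 : Finset (Finset α)}
    (hconn : ∀ X ∈ 𝒲, (G.induce (X : Set α)).Connected) {x : α} (hx : x ∈ 𝒲.sup id)
    (hsplit : ∀ 𝒱 ⊆ 𝒲, 𝒱.Nonempty → x ∉ 𝒱.sup id →
      ∃ X ∈ 𝒱, ∃ Y ∈ 𝒲 \ 𝒱, ∃ u ∈ X, ∃ v ∈ Y, G.Adj u v) :
    (G.induce (↑(𝒲.sup id) : Set α)).Connected := by
  classical
  set U : Set α := ↑(𝒲.sup id)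
  have hxU : x ∈ U := hx
  set R : Set α := {v | ∃ hv : v ∈ U, (G.induce U).Reachable ⟨x, hxU⟩ ⟨v, hv⟩}
  have hsubU : ∀ X ∈ 𝒲, (X : Set α) ⊆ U := fun X hX =>
    Finset.coe_subset.2 (Finset.le_sup (f := id) hX)
  have hmember : ∀ X ∈ 𝒲, ∀ u ∈ X, u ∈ R → (X : Set α) ⊆ R := by
    rintro X hX u hu ⟨_, hxu⟩ v hv
    refine ⟨hsubU X hX hv, hxu.trans ?_⟩
    exact ((hconn X hX).preconnected ⟨u, hu⟩ ⟨v, hv⟩).map (induceHomOfLE G (hsubU X hX)).toHom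
  have hall : ∀ X ∈ 𝒲, (X : Set α) ⊆ R := by
    by_contra! ⟨X₀, hX₀, hX₀R⟩
    set 𝒱 := 𝒲.filter fun X : Finset α => ¬ ↑X ⊆ R
    have hx𝒱 : x ∉ 𝒱.sup id := by
      intro hx𝒱
      obtain ⟨X, hX, hxX⟩ := Finset.mem_sup.1 hx𝒱
      rw [Finset.mem_filter] at hX
      exact hX.2 (hmember X hX.1 x hxX ⟨hxU, .refl _⟩)
    obtain ⟨X, hX, Y, hY, u, hu, v, hv, huv⟩ :=
      hsplit 𝒱 (Finset.filter_subset _ _) ⟨X₀, Finset.mem_filter.2 ⟨hX₀, hX₀R⟩⟩ hx𝒱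
    rw [Finset.mem_filter] at hX
    rw [Finset.mem_sdiff, Finset.mem_filter, not_and, not_not] at hY
    obtain ⟨hvU, hxv⟩ := hY.2 hY.1 hv
    have huU := hsubU X hX.1 hu
    have hvu : (G.induce U).Adj ⟨v, hvU⟩ ⟨u, huU⟩ := induce_adj.2 huv.symm
    exact hX.2 (hmember X hX.1 u hu ⟨huU, hxv.trans hvu.reachable⟩)
  rw [connected_iff_exists_forall_reachable]
  refine ⟨⟨x, hxU⟩, fun ⟨v, hv⟩ => ?_⟩
  obtain ⟨X, hX, hvX⟩ := Finset.mem_sup.1 hv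
  exact (hall X hX hvX).2

end

end SimpleGraph

open SimpleGraph Finset

def compClass (A : Finset (Sym2 V)) (v : V) : Finset V :=
  univ.filter fun u => (fromEdgeSet (↑A : Set (Sym2 V))).Reachable u v

section compClass

variable {A : Finset (Sym2 V)}

@[simp]
theorem mem_compClass {u v : V} :
    u ∈ compClass A v ↔ (fromEdgeSet (↑A : Set (Sym2 V))).Reachable u v := by
  simp [compClass]

theorem coe_compClass (v : V) :
    (compClass A v : Set V) = ((fromEdgeSet (↑A : Set (Sym2 V))).connectedComponentMk v).supp := by
  ext u
  simp [ConnectedComponent.mem_supp_iff, ConnectedComponent.eq]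

theorem compClass_eq_compClass_iff {u v : V} :
    compClass A u = compClass A v ↔ (fromEdgeSet (↑A : Set (Sym2 V))).Reachable u v := by
  simp only [← coe_inj, coe_compClass, ConnectedComponent.supp_inj, ConnectedComponent.eq]

theorem mem_compPartition {X : Finset V} : X ∈ compPartition A ↔ ∃ v, compClass A v = X := by
  simp [compPartition, compClass]

theorem eq_compClass_of_mem_compPartition {X : Finset V} (hX : X ∈ compPartition A) {u : V}
    (hu : u ∈ X) : X = compClass A u := by
  obtain ⟨v, rfl⟩ := mem_compPartition.1 hX
  exact compClass_eq_compClass_iff.2 (mem_compClass.1 hu) |>.symm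

theorem compPartition_pairwiseDisjoint :
    (compPartition A : Set (Finset V)).PairwiseDisjoint id := by
  intro X hX Y hY hXY
  refine disjoint_left.2 fun u huX huY => hXY ?_
  rw [eq_compClass_of_mem_compPartition hX huX, eq_compClass_of_mem_compPartition hY huY]

theorem connected_induce_of_mem_compPartition {G : SimpleGraph V}
    (hA : (A : Set (Sym2 V)) ⊆ G.edgeSet) {X : Finset V} (hX : X ∈ compPartition A) : (G.induce (X : Set V)).Connected := by
  obtain ⟨v, rfl⟩ := mem_compPartition.1 hX
  rw [coe_compClass]
  refine (ConnectedComponent.connected_toSimpleGraph _).mono ?_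
  exact fun a b hab => (fromEdgeSet_le G).2 (Set.sdiff_subset.trans hA) hab

end compClass

section crossEdges

variable {G : SimpleGraph V} [DecidableRel G.Adj] {𝒲 𝒱 : Finset (Finset V)}

theorem mem_sup_of_mem_crossEdges {e : Sym2 V} (he : e ∈ crossEdges G 𝒲) {v : V} (hv : v ∈ e) :
    v ∈ 𝒲.sup id := by
  obtain ⟨-, X, hX, Y, hY, -, i, j, rfl, hi, hj⟩ := mem_filter.1 he
  rcases Sym2.mem_iff.1 hv with rfl | rfl
  exacts [mem_sup.2 ⟨X, hX, hi⟩, mem_sup.2 ⟨Y, hY, hj⟩]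

theorem crossEdges_mono (h : 𝒱 ⊆ 𝒲) : crossEdges G 𝒱 ⊆ crossEdges G 𝒲 := by
  intro e he
  obtain ⟨heG, X, hX, Y, hY, hXY, i, j, rfl, hi, hj⟩ := mem_filter.1 he
  exact mem_filter.2 ⟨heG, X, h hX, Y, h hY, hXY, i, j, rfl, hi, hj⟩

theorem crossEdges_eq_sdiff_union (h : 𝒱 ⊆ 𝒲)
    (hno : ∀ X ∈ 𝒱, ∀ Y ∈ 𝒲 \ 𝒱, ∀ u ∈ X, ∀ v ∈ Y, ¬ G.Adj u v) :
    crossEdges G 𝒲 = crossEdges G (𝒲 \ 𝒱) ∪ crossEdges G 𝒱 := by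
  refine subset_antisymm ?_ (union_subset (crossEdges_mono sdiff_subset) (crossEdges_mono h))
  intro e he
  obtain ⟨heG, X, hX, Y, hY, hXY, i, j, rfl, hi, hj⟩ := mem_filter.1 he
  have hij : G.Adj i j := G.mem_edgeFinset.1 heG
  simp only [crossEdges, mem_union, mem_filter]
  by_cases hX𝒱 : X ∈ 𝒱 <;> by_cases hY𝒱 : Y ∈ 𝒱
  · exact Or.inr ⟨heG, X, hX𝒱, Y, hY𝒱, hXY, i, j, rfl, hi, hj⟩
  · exact (hno X hX𝒱 Y (mem_sdiff.2 ⟨hY, hY𝒱⟩) i hi j hj hij).elim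
  · exact (hno Y hY𝒱 X (mem_sdiff.2 ⟨hX, hX𝒱⟩) j hj i hi hij.symm).elim
  · exact Or.inl ⟨heG, X, mem_sdiff.2 ⟨hX, hX𝒱⟩, Y, mem_sdiff.2 ⟨hY, hY𝒱⟩,
      hXY, i, j, rfl, hi, hj⟩

theorem disjoint_crossEdges_sdiff (h : 𝒱 ⊆ 𝒲) (hdisj : (𝒲 : Set (Finset V)).PairwiseDisjoint id) :
    Disjoint (crossEdges G (𝒲 \ 𝒱)) (crossEdges G 𝒱) := by
  refine disjoint_left.2 fun e he he' => ?_
  obtain ⟨-, X, hX, -, -, -, i, j, rfl, hi, -⟩ := mem_filter.1 he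
  obtain ⟨Z, hZ, hiZ⟩ := mem_sup.1 (mem_sup_of_mem_crossEdges he' (Sym2.mem_mk_left i j))
  obtain ⟨hX, hX𝒱⟩ := mem_sdiff.1 hX
  exact hX𝒱 (hdisj.elim_finset hX (h hZ) i hi hiZ ▸ hZ)

theorem disjoint_crossEdges_of_subset_compPartition {A : Finset (Sym2 V)}
    (h : 𝒲 ⊆ compPartition A) : Disjoint A (crossEdges G 𝒲) := by
  refine disjoint_left.2 fun e heA he => ?_
  obtain ⟨heG, X, hX, Y, hY, hXY, i, j, rfl, hi, hj⟩ := mem_filter.1 he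
  have hij : (fromEdgeSet (↑A : Set (Sym2 V))).Adj i j :=
    (fromEdgeSet_adj _).2 ⟨heA, (G.mem_edgeFinset.1 heG).ne⟩
  refine hXY ?_
  rw [eq_compClass_of_mem_compPartition (h hX) hi, eq_compClass_of_mem_compPartition (h hY) hj]
  exact compClass_eq_compClass_iff.2 hij.reachable

end crossEdges

section potts

variable {x : V} {A : Finset (Sym2 V)}

theorem ncard_image_connectedComponentMk_le (hA : ∀ e ∈ A, x ∉ e) {𝒱 : Finset (Finset V)}
    (h𝒱 : 𝒱 ⊆ compPartition A) :
    (((fromEdgeSet (↑A : Set (Sym2 V))).induce {v | v ≠ x}).connectedComponentMk ''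
      {a | ↑a ∈ 𝒱.sup id}).ncard ≤ 𝒱.card := by
  set H := (fromEdgeSet (↑A : Set (Sym2 V))).induce {v | v ≠ x}
  have hreach (a b : {v : V | v ≠ x}) :
      H.Reachable a b ↔ (fromEdgeSet (↑A : Set (Sym2 V))).Reachable a b :=
    reachable_induce_ne_iff_of_isIsolated (isIsolated_fromEdgeSet hA)
  let cls : H.ConnectedComponent → Finset V :=
    ConnectedComponent.lift (fun a => compClass A a) fun a b p _ =>
      compClass_eq_compClass_iff.2 ((hreach a b).1 p.reachable)
  rw [← Set.ncard_coe_finset 𝒱]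
  refine Set.ncard_le_ncard_of_injOn cls ?_ ?_
  · rintro - ⟨a, ha, rfl⟩
    obtain ⟨X, hX, haX⟩ := mem_sup.1 ha
    show compClass A a ∈ (𝒱 : Set (Finset V))
    rwa [← eq_compClass_of_mem_compPartition (h𝒱 hX) haX]
  · rintro - ⟨a, -, rfl⟩ - ⟨b, -, rfl⟩ hab
    exact ConnectedComponent.sound
      ((hreach a b).2 (compClass_eq_compClass_iff.1 hab))

theorem compCountOn_add_one_le (hA : ∀ e ∈ A, x ∉ e) {𝒱 : Finset (Finset V)}
    (h𝒱 : 𝒱 ⊆ compPartition A) (hne : 𝒱.Nonempty) (hx : x ∉ 𝒱.sup id) {B : Finset (Sym2 V)}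
    (hB : ∀ e ∈ B, ∀ v ∈ e, v ∈ 𝒱.sup id) :
    compCountOn {v | v ≠ x} A + 1 ≤ compCountOn {v | v ≠ x} (A ∪ B) + 𝒱.card := by
  set D : Set {v : V | v ≠ x} := {a | ↑a ∈ 𝒱.sup id}
  set H := (fromEdgeSet (↑A : Set (Sym2 V))).induce {v | v ≠ x}
  set H' := (fromEdgeSet (↑(A ∪ B) : Set (Sym2 V))).induce {v | v ≠ x}
  have hle : H ≤ H' := fun a b hab => fromEdgeSet_mono (by simp) hab
  have hD : ∀ a b, H'.Adj a b → H.Adj a b ∨ a ∈ D ∧ b ∈ D := by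
    intro a b hab
    obtain ⟨he, hne⟩ := (fromEdgeSet_adj _).1 hab
    rcases mem_union.1 he with he | he
    · exact Or.inl ((fromEdgeSet_adj _).2 ⟨he, hne⟩)
    · exact Or.inr ⟨hB _ he _ (Sym2.mem_mk_left _ _), hB _ he _ (Sym2.mem_mk_right _ _)⟩
  have hDne : D.Nonempty := by
    obtain ⟨X, hX⟩ := hne
    obtain ⟨v, rfl⟩ := mem_compPartition.1 (h𝒱 hX)
    have hv : v ∈ 𝒱.sup id := mem_sup.2 ⟨_, hX, mem_compClass.2 (.refl v)⟩
    exact ⟨⟨v, fun hvx => hx (hvx ▸ hv)⟩, hv⟩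
  have hmerge := card_connectedComponent_add_one_le hle hD hDne
  have hmeet : (H.connectedComponentMk '' D).ncard ≤ 𝒱.card := ncard_image_connectedComponentMk_le hA h𝒱
  show Nat.card H.ConnectedComponent + 1 ≤ Nat.card H'.ConnectedComponent + 𝒱.card
  omega

theorem pottsFunOn_add_le (hA : ∀ e ∈ A, x ∉ e) {𝒱 : Finset (Finset V)}
    (h𝒱 : 𝒱 ⊆ compPartition A) (hne : 𝒱.Nonempty) (hx : x ∉ 𝒱.sup id) {B : Finset (Sym2 V)}
    (hB : ∀ e ∈ B, ∀ v ∈ e, v ∈ 𝒱.sup id) (hAB : Disjoint A B) (w : Sym2 V → ℝ) :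
    pottsFunOn {v | v ≠ x} w A + 1 + ∑ e ∈ B, w e ≤
      pottsFunOn {v | v ≠ x} w (A ∪ B) + 𝒱.card := by
  have hcount : (compCountOn {v | v ≠ x} A : ℝ) + 1 ≤
      compCountOn {v | v ≠ x} (A ∪ B) + 𝒱.card := by
    exact_mod_cast compCountOn_add_one_le hA h𝒱 hne hx hB
  rw [pottsFunOn, pottsFunOn, sum_union hAB]
  linarith

end potts

theorem minimizer_union_connected_general (G : SimpleGraph V) [DecidableRel G.Adj]
    (w : Sym2 V → ℝ) (x : V)
    (F' : Finset (Sym2 V)) (hF' : F' ⊆ G.edgeFinset.filter (fun e => x ∉ e))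
    (hopt : ∀ A ⊆ G.edgeFinset.filter (fun e => x ∉ e),
      pottsFunOn {v : V | v ≠ x} w A ≤ pottsFunOn {v : V | v ≠ x} w F')
    (𝒲 : Finset (Finset V)) (h𝒲 : 𝒲 ⊆ compPartition F')
    (hx𝒲 : ({x} : Finset V) ∈ 𝒲)
    (hmin : ∀ 𝒲' ⊆ compPartition F', ({x} : Finset V) ∈ 𝒲' →
      (𝒲.card : ℝ) - 1 - ∑ e ∈ crossEdges G 𝒲, w e ≤
        (𝒲'.card : ℝ) - 1 - ∑ e ∈ crossEdges G 𝒲', w e) :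
    (G.induce (↑(𝒲.sup id) : Set V)).Connected := by
  have hF'G : (F' : Set (Sym2 V)) ⊆ G.edgeSet := fun e he =>
    G.mem_edgeFinset.1 (mem_filter.1 (hF' he)).1
  refine induce_sup_connected_of_forall_exists_adj
    (fun X hX => connected_induce_of_mem_compPartition hF'G (h𝒲 hX))
    (mem_sup.2 ⟨{x}, hx𝒲, mem_singleton_self x⟩) fun 𝒱 h𝒱 hne hx => ?_
  by_contra! hno
  have hx𝒱 : {x} ∉ 𝒱 := fun h => hx (mem_sup.2 ⟨{x}, h, mem_singleton_self x⟩)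
  have hcard : (𝒱.card : ℝ) ≤ ∑ e ∈ crossEdges G 𝒱, w e := by
    have hdisj := (compPartition_pairwiseDisjoint (A := F')).subset (coe_subset.2 h𝒲)
    have h := hmin (𝒲 \ 𝒱) (sdiff_subset.trans h𝒲) (mem_sdiff.2 ⟨hx𝒲, hx𝒱⟩)
    rw [crossEdges_eq_sdiff_union h𝒱 hno, sum_union (disjoint_crossEdges_sdiff h𝒱 hdisj),
      ← card_sdiff_add_card_eq_card h𝒱] at h
    push_cast at h
    linarith
  have hE : crossEdges G 𝒱 ⊆ G.edgeFinset.filter (fun e => x ∉ e) := fun e he =>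
    mem_filter.2 ⟨(mem_filter.1 he).1, fun hxe => hx (mem_sup_of_mem_crossEdges he hxe)⟩
  have hle := hopt _ (union_subset hF' hE)
  have hgain := pottsFunOn_add_le (fun e he => (mem_filter.1 (hF' he)).2) (h𝒱.trans h𝒲) hne hx
    (fun e he v hv => mem_sup_of_mem_crossEdges (G := G) he hv)
    (disjoint_crossEdges_of_subset_compPartition (h𝒱.trans h𝒲)) w
  linarith

/-- Connectivity of minimizers: let `G = (V, E)` have nonnegative edge weights,
`x ∈ V`, let `F'` be a set of edges of `G - x` maximizing `f_{G-x}`, and let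
`P_G(F')` be the partition of `V` formed by the connected components of
`(V \ {x}, F')` together with `{x}`.  Then any `𝒲 ⊆ P_G(F')` containing `{x}` which
minimizes `|𝒲| - 1 - w(E(𝒲))` over subsets of `P_G(F')` containing `{x}` is such that
the union `∪_{X ∈ 𝒲} X` induces a connected subgraph of `G`. -/
theorem minimizer_union_connected (G : SimpleGraph V) [DecidableRel G.Adj]
    (w : Sym2 V → ℝ) (hw : ∀ e, 0 ≤ w e) (x : V)
    (F' : Finset (Sym2 V)) (hF' : F' ⊆ G.edgeFinset.filter (fun e => x ∉ e))
    (hopt : ∀ A ⊆ G.edgeFinset.filter (fun e => x ∉ e),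
      pottsFunOn {v : V | v ≠ x} w A ≤ pottsFunOn {v : V | v ≠ x} w F')
    (𝒲 : Finset (Finset V)) (h𝒲 : 𝒲 ⊆ compPartition F')
    (hx𝒲 : ({x} : Finset V) ∈ 𝒲)
    (hmin : ∀ 𝒲' ⊆ compPartition F', ({x} : Finset V) ∈ 𝒲' →
      (𝒲.card : ℝ) - 1 - ∑ e ∈ crossEdges G 𝒲, w e ≤
        (𝒲'.card : ℝ) - 1 - ∑ e ∈ crossEdges G 𝒲', w e) :
    (G.induce (↑(𝒲.sup id) : Set V)).Connected :=
  minimizer_union_connected_general G w x F' hF' hopt 𝒲 h𝒲 hx𝒲 hmin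
end
end

section
/- CUT identity: let H = (V, E) be a finite graph with nonnegative edge weights w : E → ℝ≥0. For u ∈ V set p(u) = (1/2)·Σ_{v : uv∈E} w(uv), and let K = Σ_{u∈V} max(p(u) − 1, 0). Then for every W ⊆ V: Σ_{u∉W} max(p(u) − 1, 0) + Σ_{u∈W} max(1 − p(u), 0) + (1/2)·Σ_{uv∈E, u∈W, v∉W} w(uv) = |W| − w(W) + K, where w(W) is the total weight of the edges with both endpoints in W. (The left-hand side is the capacity of the cut δ({s}∪W) in the network N(H,w).) -/
/-!
Summing `p` over `W` counts each edge inside `W` twice and each edge leaving `W` once, at half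
its weight: `∑_{u ∈ W} p(u) = w(W) + (1/2) w(δ W)`. Writing `max (1 - p) 0 = max (p - 1) 0 + (1 - p)`
turns the sum over `W` into the part of `K` missing from the first sum plus `|W| - ∑_{u ∈ W} p(u)`.
-/

open scoped Classical

noncomputable section

variable {V : Type*} [Fintype V] [DecidableEq V]

/-- `p(u) = (1/2) Σ_{v : uv ∈ E} w(uv)` : half the total weight of the edges
incident to `u`. -/
def halfDeg (G : SimpleGraph V) [DecidableRel G.Adj] (w : Sym2 V → ℝ) (u : V) : ℝ :=
  (1 / 2) * ∑ v ∈ G.neighborFinset u, w s(u, v)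

/-- `w(W)` : the total weight of the edges of the graph having both endpoints in `W`. -/
def inWeight (G : SimpleGraph V) [DecidableRel G.Adj] (w : Sym2 V → ℝ)
    (W : Finset V) : ℝ :=
  ∑ e ∈ G.edgeFinset.filter (fun e => ∀ v ∈ e, v ∈ W), w e

lemma max_sub_zero_eq_max_sub_zero_add {α : Type*} [AddCommGroup α] [LinearOrder α]
    [IsOrderedAddMonoid α] (a b : α) :
    max (b - a) 0 = max (a - b) 0 + (b - a) := by
  rcases le_total a b with h | h
  · simp [max_eq_left (sub_nonneg.2 h), max_eq_right (sub_nonpos.2 h)]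
  · simp [max_eq_right (sub_nonpos.2 h), max_eq_left (sub_nonneg.2 h)]

lemma Sym2.sum_toFinset_mk_ite_mem {M : Type*} [AddCommMonoid M] (W : Finset V) {a b : V}
    (hab : a ≠ b) (x : M) :
    ∑ u ∈ s(a, b).toFinset, (if u ∈ W then x else 0) =
      (if ∀ v ∈ s(a, b), v ∈ W then x + x else 0) +
        (if ∃ i j, s(a, b) = s(i, j) ∧ i ∈ W ∧ j ∉ W then x else 0) := by
  rw [Sym2.toFinset_mk_eq, Finset.sum_pair hab]
  by_cases ha : a ∈ W <;> by_cases hb : b ∈ W <;>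
    simp [ha, hb, or_and_right, exists_or, or_imp, forall_and]

namespace SimpleGraph

variable (G : SimpleGraph V) [DecidableRel G.Adj]

def cutWeight (w : Sym2 V → ℝ) (W : Finset V) : ℝ :=
  ∑ e ∈ G.edgeFinset.filter (fun e => ∃ i j, e = s(i, j) ∧ i ∈ W ∧ j ∉ W), w e

lemma sum_neighborFinset_eq_sum_incidenceFinset {M : Type*} [AddCommMonoid M]
    (u : V) (f : Sym2 V → M) :
    ∑ v ∈ G.neighborFinset u, f s(u, v) = ∑ e ∈ G.incidenceFinset u, f e := by
  refine Finset.sum_nbij (fun v => s(u, v)) (fun v hv => ?_) (fun v _ v' _ h => ?_)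
    (fun e he => ?_) (fun _ _ => rfl)
  · exact (G.mem_incidenceFinset _ _).2 ⟨(G.mem_neighborFinset _ _).1 hv, Sym2.mem_mk_left _ _⟩
  · exact Sym2.congr_right.1 h
  · obtain ⟨he, hu⟩ := (G.mem_incidenceFinset _ _).1 he
    obtain ⟨v, rfl⟩ := Sym2.mem_iff_exists.1 hu
    exact ⟨v, (G.mem_neighborFinset _ _).2 he, rfl⟩

lemma sum_sum_neighborFinset_eq_sum_edgeFinset {M : Type*} [AddCommMonoid M]
    (f : V → Sym2 V → M) :
    ∑ u, ∑ v ∈ G.neighborFinset u, f u s(u, v) =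
      ∑ e ∈ G.edgeFinset, ∑ u ∈ e.toFinset, f u e := by
  simp_rw [sum_neighborFinset_eq_sum_incidenceFinset]
  refine Finset.sum_comm' fun u e => ?_
  simp [mem_incidenceFinset, incidenceSet, Sym2.mem_toFinset, and_comm]

lemma sum_sum_neighborFinset_eq_two_mul_inWeight_add_cutWeight (w : Sym2 V → ℝ)
    (W : Finset V) :
    ∑ u ∈ W, ∑ v ∈ G.neighborFinset u, w s(u, v) = 2 * inWeight G w W + G.cutWeight w W := by
  calc ∑ u ∈ W, ∑ v ∈ G.neighborFinset u, w s(u, v)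
      = ∑ u, ∑ v ∈ G.neighborFinset u, if u ∈ W then w s(u, v) else 0 := by
        simp [Finset.sum_ite_irrel, Finset.sum_ite_mem]
    _ = ∑ e ∈ G.edgeFinset, ∑ u ∈ e.toFinset, if u ∈ W then w e else 0 :=
        G.sum_sum_neighborFinset_eq_sum_edgeFinset fun u e => if u ∈ W then w e else 0
    _ = ∑ e ∈ G.edgeFinset, ((if ∀ v ∈ e, v ∈ W then w e + w e else 0) +
          (if ∃ i j, e = s(i, j) ∧ i ∈ W ∧ j ∉ W then w e else 0)) := by
        refine Finset.sum_congr rfl fun e he => ?_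
        induction e using Sym2.ind with
        | h a b =>
          exact Sym2.sum_toFinset_mk_ite_mem W (G.ne_of_adj (G.mem_edgeFinset.1 he)) (w _)
    _ = 2 * inWeight G w W + G.cutWeight w W := by
        rw [Finset.sum_add_distrib, ← Finset.sum_filter, ← Finset.sum_filter, inWeight, cutWeight,
          Finset.mul_sum]
        simp only [two_mul]

end SimpleGraph

lemma sum_halfDeg (G : SimpleGraph V) [DecidableRel G.Adj] (w : Sym2 V → ℝ) (W : Finset V) :
    ∑ u ∈ W, halfDeg G w u = inWeight G w W + (1 / 2) * G.cutWeight w W := by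
  simp only [halfDeg, ← Finset.mul_sum,
    G.sum_sum_neighborFinset_eq_two_mul_inWeight_add_cutWeight]
  ring

theorem cut_identity_general (G : SimpleGraph V) [DecidableRel G.Adj]
    (w : Sym2 V → ℝ) (W : Finset V) :
    (∑ u ∈ Wᶜ, max (halfDeg G w u - 1) 0) +
      (∑ u ∈ W, max (1 - halfDeg G w u) 0) +
      (1 / 2) * ∑ e ∈ G.edgeFinset.filter
          (fun e => ∃ i j, e = s(i, j) ∧ i ∈ W ∧ j ∉ W), w e =
    (W.card : ℝ) - inWeight G w W + ∑ u : V, max (halfDeg G w u - 1) 0 := by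
  have hW : ∑ u ∈ W, max (1 - halfDeg G w u) 0 =
      ∑ u ∈ W, max (halfDeg G w u - 1) 0 + (W.card - ∑ u ∈ W, halfDeg G w u) := by
    rw [Finset.sum_congr rfl fun u _ => max_sub_zero_eq_max_sub_zero_add (halfDeg G w u) 1,
      Finset.sum_add_distrib, Finset.sum_sub_distrib, Finset.sum_const, nsmul_one]
  rw [hW, sum_halfDeg, ← Finset.sum_compl_add_sum W, SimpleGraph.cutWeight]
  ring

/-- CUT identity: let `H = (V, E)` be a finite graph with nonnegative edge weights `w`,
`p(u) = (1/2) Σ_{v : uv ∈ E} w(uv)` and `K = Σ_{u ∈ V} max (p(u) - 1) 0`. Then for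
every `W ⊆ V`,
`Σ_{u ∉ W} max (p(u)-1) 0 + Σ_{u ∈ W} max (1-p(u)) 0 + (1/2) Σ_{uv ∈ E, u ∈ W, v ∉ W} w(uv)
  = |W| - w(W) + K`,
the left-hand side being the capacity of the cut `δ({s} ∪ W)` in the network `N(H,w)`. -/
theorem cut_identity (G : SimpleGraph V) [DecidableRel G.Adj]
    (w : Sym2 V → ℝ) (hw : ∀ e, 0 ≤ w e) (W : Finset V) :
    (∑ u ∈ Wᶜ, max (halfDeg G w u - 1) 0) +
      (∑ u ∈ W, max (1 - halfDeg G w u) 0) +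
      (1 / 2) * ∑ e ∈ G.edgeFinset.filter
          (fun e => ∃ i j, e = s(i, j) ∧ i ∈ W ∧ j ∉ W), w e =
    (W.card : ℝ) - inWeight G w W + ∑ u : V, max (halfDeg G w u - 1) 0 :=
  cut_identity_general G w W
end
end

section
/- One-step correctness of the Optimal Cooperation Algorithm: let G = (V, E) be a finite graph with edge weights w : E → ℝ, 0 ≤ w(e) for all e. Let U ⊆ V, u ∈ V ∖ U, and let P be a Potts partition of the induced subgraph G(U) maximizing f over Potts partitions of G(U). If 𝒲 ⊆ P ∪ {{u}} contains {u} and minimizes |𝒲| − 1 − w(E(𝒲)) over all subsets of P ∪ {{u}} containing {u}, then the partition (P ∖ 𝒲) ∪ {∪_{X∈𝒲} X} of U ∪ {u} maximizes f over Potts partitions of G(U ∪ {u}). -/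
open scoped Classical

noncomputable section

variable {V : Type*} [Fintype V] [DecidableEq V]

/-- A family of vertex classes is a Potts partition (of its underlying vertex set, for
the corresponding induced subgraph of `G`) when every class induces a connected
subgraph of `G`. -/
def IsPotts (G : SimpleGraph V) (Q : Finset (Finset V)) : Prop :=
  ∀ X ∈ Q, (G.induce (↑X : Set V)).Connected

/-- `f` of a partition: its number of classes plus the total weight of the edges with
both endpoints in a single class (for classes contained in `U`, these are exactly the
edges of the induced subgraph `G(U)` with both endpoints in one class). -/
def partitionValue (G : SimpleGraph V) [DecidableRel G.Adj] (w : Sym2 V → ℝ)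
    (Q : Finset (Finset V)) : ℝ :=
  (Q.card : ℝ) +
    ∑ e ∈ G.edgeFinset.filter (fun e => ∃ X ∈ Q, ∀ v ∈ e, v ∈ X), w e

/-!
Write `B = P ∪ {{u}}`, a Potts partition of `U ∪ {u}` with `f B = f P + 1`, and compare a
Potts partition `Q` of `U ∪ {u}` with `B` through supermodularity: gluing the parts of `Q`
along the classes of `B` gives a Potts partition `J` coarser than both, and with the Potts
meet `M` of `Q` and `B` (components of the pairwise intersections of parts)
`f Q + f B ≤ f J + f M`. Parts are counted by gluing one class of `B` at a time, edges by
inclusion–exclusion (weights are nonnegative).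

Any Potts partition of `U ∪ {u}` having `{u}` as a part is worth at most `f P + 1`; this
applies to `M`, and to the partition `R` obtained from `J` by splitting the class of `u` back
into the family `𝒲' ∋ {u}` of classes of `B` it contains. Hence
`f Q ≤ f J = f R + 1 - |𝒲'| + w(E(𝒲')) ≤ f B + 1 - |𝒲| + w(E(𝒲))`, the value of the merged
partition, by minimality of `𝒲`.

That partition is Potts: if `⋃ 𝒲` were disconnected, a component `D` avoiding `u` would be the
union of a subfamily `𝒟 ⊆ P` with no edges towards the rest of `𝒲`; minimality of `𝒲` then
gives `|𝒟| ≤ w(E(𝒟))`, and merging `𝒟` inside `P` would beat `P`.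
-/

open Finset

namespace Finpartition

variable {α : Type*} [DecidableEq α] {s t : Finset α}

def disjUnion (P : Finpartition s) (Q : Finpartition t) (h : Disjoint s t) :
    Finpartition (s ∪ t) where
  parts := P.parts ∪ Q.parts
  supIndep := by
    rw [supIndep_iff_pairwiseDisjoint, coe_union]
    exact P.disjoint.union Q.disjoint fun X hX Y hY _ => h.mono (P.le hX) (Q.le hY)
  sup_parts := by rw [sup_union, P.sup_parts, Q.sup_parts]; rfl
  bot_notMem := by simp only [mem_union, P.bot_notMem, Q.bot_notMem, or_self,
    not_false_eq_true]

lemma subset_of_le {P Q : Finpartition s} (hPQ : P ≤ Q) {X Z : Finset α} (hX : X ∈ P.parts)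
    (hZ : Z ∈ Q.parts) {x : α} (hxX : x ∈ X) (hxZ : x ∈ Z) : X ⊆ Z := by
  obtain ⟨Z', hZ', hXZ'⟩ := hPQ hX
  rwa [Q.eq_of_mem_parts hZ hZ' hxZ (hXZ' hxX)]

lemma singleton_mem_parts_of_le {P Q : Finpartition s} (hPQ : P ≤ Q) {a : α}
    (ha : {a} ∈ Q.parts) : {a} ∈ P.parts := by
  have has : a ∈ s := Q.le ha (mem_singleton_self a)
  have hsub := subset_of_le hPQ (P.part_mem.2 has) ha (P.mem_part_self.2 has)
    (mem_singleton_self a)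
  rw [← hsub.antisymm (singleton_subset_iff.2 (P.mem_part_self.2 has))]
  exact P.part_mem.2 has

lemma exists_parts_eq_erase_singleton {a : α} (ha : a ∉ s) (P : Finpartition (insert a s))
    (h : {a} ∈ P.parts) : ∃ Q : Finpartition s, Q.parts = P.parts.erase {a} := by
  refine ⟨P.ofSubset (erase_subset _ _) ?_, rfl⟩
  ext v
  simp only [mem_sup, mem_erase, id]
  constructor
  · rintro ⟨X, ⟨hXa, hX⟩, hvX⟩
    rcases mem_insert.1 (P.le hX hvX) with rfl | hvs
    · exact absurd (P.eq_of_mem_parts hX h hvX (mem_singleton_self v)) hXa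
    · exact hvs
  · intro hvs
    obtain ⟨X, hX, hvX⟩ := P.exists_mem (mem_insert_of_mem hvs)
    refine ⟨X, ⟨?_, hX⟩, hvX⟩
    rintro rfl
    exact ha (mem_singleton.1 hvX ▸ hvs)

section Merge

variable {P : Finpartition s} {𝒜 : Finset (Finset α)}

lemma sup_ne_empty_of_subset (h𝒜 : 𝒜 ⊆ P.parts) (hne : 𝒜.Nonempty) : 𝒜.sup id ≠ ∅ := by
  obtain ⟨X, hX⟩ := hne
  exact ne_bot_of_le_ne_bot (P.ne_bot (h𝒜 hX)) (le_sup (f := id) hX)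

variable (P) in
def merge (h𝒜 : 𝒜 ⊆ P.parts) (hne : 𝒜.Nonempty) : Finpartition s :=
  ((P.ofSubset sdiff_subset rfl).disjUnion (indiscrete (sup_ne_empty_of_subset h𝒜 hne))
    (P.supIndep.disjoint_sup_sup sdiff_subset h𝒜 sdiff_disjoint)).copy
    (by show _ ⊔ _ = s; rw [← sup_union, sdiff_union_of_subset h𝒜, P.sup_parts])

lemma parts_merge (h𝒜 : 𝒜 ⊆ P.parts) (hne : 𝒜.Nonempty) :
    (P.merge h𝒜 hne).parts = (P.parts \ 𝒜) ∪ {𝒜.sup id} := rfl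

lemma le_merge (h𝒜 : 𝒜 ⊆ P.parts) (hne : 𝒜.Nonempty) : P ≤ P.merge h𝒜 hne := by
  intro X hX
  by_cases hX𝒜 : X ∈ 𝒜
  · exact ⟨𝒜.sup id, by simp [parts_merge], le_sup (f := id) hX𝒜⟩
  · exact ⟨X, by simp [parts_merge, hX, hX𝒜], le_rfl⟩

lemma card_merge (h𝒜 : 𝒜 ⊆ P.parts) (hne : 𝒜.Nonempty) :
    #(P.merge h𝒜 hne).parts + #𝒜 = #P.parts + 1 := by
  have hnot : 𝒜.sup id ∉ P.parts \ 𝒜 := by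
    intro h
    obtain ⟨X, hX⟩ := hne
    obtain ⟨x, hx⟩ := P.nonempty_of_mem_parts (h𝒜 hX)
    have hX' := P.eq_of_mem_parts (h𝒜 hX) (mem_sdiff.1 h).1 hx (le_sup (f := id) hX hx)
    exact (mem_sdiff.1 h).2 (hX' ▸ hX)
  rw [parts_merge, card_union_of_disjoint (disjoint_singleton_right.2 hnot), card_singleton,
    card_sdiff_of_subset h𝒜]
  have := card_le_card h𝒜
  omega

end Merge

theorem exists_merge_eq_of_le {B J : Finpartition s} (hBJ : B ≤ J) {C : Finset α}
    (hC : C ∈ J.parts) :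
    ∃ (R : Finpartition s) (h : {Y ∈ B.parts | Y ⊆ C} ⊆ R.parts)
      (hne : {Y ∈ B.parts | Y ⊆ C}.Nonempty), R.parts ⊆ J.parts ∪ B.parts ∧ R.merge h hne = J := by
  set 𝒲 := {Y ∈ B.parts | Y ⊆ C}
  have hpart : ∀ c ∈ C, B.part c ∈ 𝒲 ∧ c ∈ B.part c := fun c hc => by
    have hcs : c ∈ s := J.le hC hc
    refine ⟨mem_filter.2 ⟨B.part_mem.2 hcs, ?_⟩, B.mem_part_self.2 hcs⟩
    exact subset_of_le hBJ (B.part_mem.2 hcs) hC (B.mem_part_self.2 hcs) hc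
  have hsup : 𝒲.sup id = C := (Finset.sup_le fun Y hY => (mem_filter.1 hY).2).antisymm
    fun c hc => mem_sup.2 ⟨B.part c, hpart c hc⟩
  have hdisj : Disjoint ((J.parts.erase C).sup id) (𝒲.sup id) :=
    hsup ▸ (J.supIndep (erase_subset C _) hC (notMem_erase C _)).symm
  have hunion : (J.parts.erase C).sup id ∪ 𝒲.sup id = s := by
    conv_rhs => rw [← J.sup_parts, ← insert_erase hC, sup_insert]
    rw [hsup, union_comm]
    rfl
  let R := ((J.ofSubset (erase_subset C _) rfl).disjUnion (B.ofSubset (filter_subset _ _) rfl)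
    hdisj).copy hunion
  obtain ⟨c, hc⟩ := J.nonempty_of_mem_parts hC
  refine ⟨R, subset_union_right, ⟨B.part c, (hpart c hc).1⟩,
    union_subset_union (erase_subset C _) (filter_subset _ _), Finpartition.ext ?_⟩
  have hdisj' : Disjoint (J.parts.erase C) 𝒲 := disjoint_left.2 fun X hX hX𝒲 => by
    obtain ⟨x, hx⟩ := J.nonempty_of_mem_parts (mem_of_mem_erase hX)
    exact ne_of_mem_erase hX (J.eq_of_mem_parts (mem_of_mem_erase hX) hC hx
      ((mem_filter.1 hX𝒲).2 hx))
  change (J.parts.erase C ∪ 𝒲) \ 𝒲 ∪ {𝒲.sup id} = J.parts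
  rw [union_sdiff_right, sdiff_eq_self_of_disjoint hdisj', hsup, union_comm, ← insert_eq,
    insert_erase hC]

lemma card_filter_not_disjoint_le_of_le {P Q : Finpartition s} (hPQ : P ≤ Q) (Y : Finset α) :
    #{Z ∈ Q.parts | ¬Disjoint Z Y} ≤ #{X ∈ P.parts | ¬Disjoint X Y} := by
  refine card_le_card_of_forall_subsingleton (fun Z X => X ⊆ Z) (fun Z hZ => ?_) ?_
  · obtain ⟨hZ, hZY⟩ := mem_filter.1 hZ
    obtain ⟨y, hyZ, hyY⟩ := not_disjoint_iff.1 hZY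
    have hys : y ∈ s := Q.le hZ hyZ
    refine ⟨P.part y, mem_filter.2 ⟨P.part_mem.2 hys, not_disjoint_iff.2 ⟨y, ?_, hyY⟩⟩, ?_⟩
    · exact P.mem_part_self.2 hys
    · exact subset_of_le hPQ (P.part_mem.2 hys) hZ (P.mem_part_self.2 hys) hyZ
  · intro X hX Z₁ hZ₁ Z₂ hZ₂
    obtain ⟨x, hx⟩ := P.nonempty_of_mem_parts (mem_filter.1 hX).1
    exact Q.eq_of_mem_parts (mem_filter.1 hZ₁.1).1 (mem_filter.1 hZ₂.1).1 (hZ₁.2 hx) (hZ₂.2 hx)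

lemma card_filter_not_disjoint_le_card_restrict (P : Finpartition s) {Y : Finset α}
    (hY : Y ⊆ s) : #{X ∈ P.parts | ¬Disjoint X Y} ≤ #(P.restrict hY).parts := by
  refine card_le_card_of_injOn (· ∩ Y) (fun X hX => ?_) fun X hX X' hX' hXX' => ?_
  · obtain ⟨hX, hXY⟩ := mem_filter.1 hX
    exact mem_erase.2 ⟨(not_disjoint_iff_nonempty_inter.1 hXY).ne_empty, mem_image_of_mem _ hX⟩
  · obtain ⟨x, hx⟩ := not_disjoint_iff_nonempty_inter.1 (mem_filter.1 hX).2
    have hx' : x ∈ X' ∩ Y := (show X ∩ Y = X' ∩ Y from hXX') ▸ hx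
    exact P.eq_of_mem_parts (mem_filter.1 hX).1 (mem_filter.1 hX').1 (mem_inter.1 hx).1
      (mem_inter.1 hx').1

end Finpartition

namespace SimpleGraph

section Components

variable {α : Type*} {G : SimpleGraph α}

lemma connected_induce_singleton (v : α) : (G.induce (({v} : Finset α) : Set α)).Connected := by
  rw [coe_singleton, induce_singleton_eq_top]
  exact connected_top

variable [DecidableEq α] {s Y : Finset α} {v x y : α}

lemma connected_induce_pair (h : G.Adj x y) :
    (G.induce (({x, y} : Finset α) : Set α)).Connected := by
  rw [coe_pair]
  exact G.induce_pair_connected_of_adj h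

/-- The vertex set of the connected component of `v` in `G[s]` (empty if `v ∉ s`). -/
def componentIn (G : SimpleGraph α) (s : Finset α) (v : α) : Finset α :=
  (s.powerset.filter fun Y : Finset α => v ∈ Y ∧ (G.induce (Y : Set α)).Connected).sup id

lemma componentIn_subset : G.componentIn s v ⊆ s :=
  Finset.sup_le fun _ hY => mem_powerset.1 (mem_filter.1 hY).1

lemma subset_componentIn (hYs : Y ⊆ s) (hvY : v ∈ Y) (hY : (G.induce (Y : Set α)).Connected) :
    Y ⊆ G.componentIn s v :=
  le_sup (f := id) (mem_filter.2 ⟨mem_powerset.2 hYs, hvY, hY⟩)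

lemma mem_componentIn_self (hv : v ∈ s) : v ∈ G.componentIn s v :=
  subset_componentIn (singleton_subset_iff.2 hv) (mem_singleton_self v)
    (connected_induce_singleton v) (mem_singleton_self v)

lemma connected_componentIn (hv : v ∈ s) :
    (G.induce (G.componentIn s v : Set α)).Connected := by
  refine G.induce_connected_of_patches v (mem_componentIn_self hv) fun {x} hx => ?_
  obtain ⟨Y, hY, hxY⟩ := mem_sup.1 hx
  obtain ⟨-, hvY, hYconn⟩ := mem_filter.1 hY
  exact ⟨Y, coe_subset.2 (le_sup (f := id) hY), hvY, hxY, hYconn.preconnected _ _⟩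

lemma subset_componentIn_of_not_disjoint (hv : v ∈ s) (hYs : Y ⊆ s)
    (hY : (G.induce (Y : Set α)).Connected) (hYC : ¬Disjoint Y (G.componentIn s v)) :
    Y ⊆ G.componentIn s v := by
  have hconn : (G.induce ((Y ∪ G.componentIn s v : Finset α) : Set α)).Connected := by
    rw [coe_union]
    exact induce_union_connected hY.preconnected (connected_componentIn hv).preconnected
      (by simpa [← coe_inter, ← not_disjoint_iff_nonempty_inter] using hYC)
  exact subset_union_left.trans (subset_componentIn (union_subset hYs componentIn_subset)
    (mem_union_right _ (mem_componentIn_self hv)) hconn)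

lemma componentIn_eq (hx : x ∈ G.componentIn s v) : G.componentIn s x = G.componentIn s v := by
  have hv : v ∈ s := by
    obtain ⟨Y, hY, -⟩ := mem_sup.1 hx
    exact mem_powerset.1 (mem_filter.1 hY).1 (mem_filter.1 hY).2.1
  have hxs : x ∈ s := componentIn_subset hx
  refine (subset_componentIn_of_not_disjoint hv componentIn_subset (connected_componentIn hxs)
    (not_disjoint_iff.2 ⟨x, mem_componentIn_self hxs, hx⟩)).antisymm ?_
  exact subset_componentIn componentIn_subset hx (connected_componentIn hv)

lemma mem_componentIn_of_adj (hv : v ∈ s) (hx : x ∈ G.componentIn s v) (hy : y ∈ s)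
    (h : G.Adj x y) : y ∈ G.componentIn s v :=
  subset_componentIn_of_not_disjoint hv (insert_subset (componentIn_subset hx)
    (singleton_subset_iff.2 hy)) (connected_induce_pair h)
    (not_disjoint_iff.2 ⟨x, mem_insert_self x _, hx⟩) (mem_insert_of_mem (mem_singleton_self y))

def componentPartition (G : SimpleGraph α) (s : Finset α) : Finpartition s :=
  .ofExistsUnique (s.image (G.componentIn s))
    (by simp only [mem_image]; rintro _ ⟨v, -, rfl⟩; exact componentIn_subset)
    (fun v hv => ⟨G.componentIn s v, ⟨mem_image_of_mem _ hv, mem_componentIn_self hv⟩, by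
      rintro _ ⟨hX, hvX⟩
      obtain ⟨x, -, rfl⟩ := mem_image.1 hX
      exact (componentIn_eq hvX).symm⟩)
    (by simp only [mem_image]; rintro ⟨v, hv, hvempty⟩
        exact notMem_empty v (hvempty ▸ mem_componentIn_self hv))

lemma isPotts_componentPartition : IsPotts G (G.componentPartition s).parts := by
  intro X hX
  obtain ⟨v, hv, rfl⟩ := mem_image.1 hX
  exact connected_componentIn hv

lemma connected_induce_sup_of_not_disjoint {𝒜 : Finset (Finset α)}
    (hY : (G.induce (Y : Set α)).Connected) (hY𝒜 : Y ⊆ 𝒜.sup id)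
    (h𝒜 : ∀ X ∈ 𝒜, (G.induce (X : Set α)).Connected ∧ ¬Disjoint X Y) :
    (G.induce ((𝒜.sup id : Finset α) : Set α)).Connected := by
  obtain ⟨⟨y, hy⟩⟩ := hY.nonempty
  refine G.induce_connected_of_patches y (hY𝒜 hy) fun {v} hv => ?_
  obtain ⟨X, hX, hvX⟩ := mem_sup.1 hv
  have hXY : (G.induce ((X ∪ Y : Finset α) : Set α)).Connected := by
    rw [coe_union]
    exact induce_union_connected (h𝒜 X hX).1.preconnected hY.preconnected
      (by simpa [← coe_inter, ← not_disjoint_iff_nonempty_inter] using (h𝒜 X hX).2)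
  exact ⟨_, coe_subset.2 (union_subset (le_sup (f := id) hX) hY𝒜), mem_union_right _ hy,
    mem_union_left _ hvX, hXY.preconnected _ _⟩

lemma sup_filter_subset_componentIn {𝒲 : Finset (Finset α)}
    (h𝒲 : ∀ X ∈ 𝒲, (G.induce (X : Set α)).Connected) (hx : x ∈ 𝒲.sup id) :
    {X ∈ 𝒲 | X ⊆ G.componentIn (𝒲.sup id) x}.sup id = G.componentIn (𝒲.sup id) x := by
  refine (Finset.sup_le fun X hX => (mem_filter.1 hX).2).antisymm fun y hy => ?_
  obtain ⟨X, hX, hyX⟩ := mem_sup.1 (componentIn_subset hy)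
  refine mem_sup.2 ⟨X, mem_filter.2 ⟨hX, ?_⟩, hyX⟩
  exact subset_componentIn_of_not_disjoint hx (le_sup (f := id) hX) (h𝒲 X hX)
    (not_disjoint_iff.2 ⟨y, hyX, hy⟩)

end Components

section PottsPartitions

variable {α : Type*} [DecidableEq α] {G : SimpleGraph α} {s : Finset α}

/-- The meet of `A` and `B` among Potts partitions: the components of the intersections of
a part of `A` with a part of `B`. -/
def pottsMeet (G : SimpleGraph α) (A B : Finpartition s) : Finpartition s :=
  B.bind fun _ hY => (A.restrict (B.le hY)).bind fun Z _ => G.componentPartition Z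

variable {A B : Finpartition s}

lemma isPotts_pottsMeet : IsPotts G (G.pottsMeet A B).parts := by
  intro X hX
  obtain ⟨Y, hY, hX⟩ := Finpartition.mem_bind.1 hX
  obtain ⟨Z, hZ, hX⟩ := Finpartition.mem_bind.1 hX
  exact isPotts_componentPartition X hX

lemma pottsMeet_le_right : G.pottsMeet A B ≤ B := by
  intro X hX
  obtain ⟨Y, hY, hX⟩ := Finpartition.mem_bind.1 hX
  obtain ⟨Z, hZ, hX⟩ := Finpartition.mem_bind.1 hX
  exact ⟨Y, hY, ((G.componentPartition Z).le hX).trans ((A.restrict (B.le hY)).le hZ)⟩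

lemma sum_card_filter_not_disjoint_le_card_pottsMeet :
    ∑ Y ∈ B.parts, #{X ∈ A.parts | ¬Disjoint X Y} ≤ #(G.pottsMeet A B).parts := by
  rw [pottsMeet, Finpartition.card_bind, ← sum_attach]
  refine sum_le_sum fun Y _ => ?_
  rw [Finpartition.card_bind]
  refine (A.card_filter_not_disjoint_le_card_restrict (B.le Y.2)).trans ?_
  rw [← card_attach]
  refine card_eq_sum_ones _ ▸ sum_le_sum fun Z _ => ?_
  exact card_pos.2 ((G.componentPartition Z.1).parts_nonempty
    ((A.restrict (B.le Y.2)).ne_bot Z.2))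

lemma isPotts_merge {P : Finpartition s} {𝒜 : Finset (Finset α)} (hP : IsPotts G P.parts)
    (h𝒜 : 𝒜 ⊆ P.parts) (hne : 𝒜.Nonempty)
    (hconn : (G.induce ((𝒜.sup id : Finset α) : Set α)).Connected) :
    IsPotts G (P.merge h𝒜 hne).parts := by
  intro X hX
  rcases mem_union.1 hX with hX | hX
  · exact hP X (mem_sdiff.1 hX).1
  · exact mem_singleton.1 hX ▸ hconn

/-- Gluing the parts of `A` that meet `Y` removes `#{X ∈ A.parts | ¬Disjoint X Y} - 1` parts,
and these counts only decrease as `A` gets coarser. -/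
theorem exists_coarsening (𝒴 : Finset (Finset α))
    (h𝒴 : ∀ Y ∈ 𝒴, Y ⊆ s ∧ (G.induce (Y : Set α)).Connected)
    (A : Finpartition s) (hA : IsPotts G A.parts) :
    ∃ J : Finpartition s, IsPotts G J.parts ∧ A ≤ J ∧ (∀ Y ∈ 𝒴, ∃ Z ∈ J.parts, Y ⊆ Z) ∧
      #A.parts + #𝒴 ≤ #J.parts + ∑ Y ∈ 𝒴, #{X ∈ A.parts | ¬Disjoint X Y} := by
  induction 𝒴 using Finset.induction_on generalizing A with
  | empty => exact ⟨A, hA, le_rfl, by simp, by simp⟩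
  | insert Y 𝒴 hY ih =>
    obtain ⟨hYs, hYconn⟩ := h𝒴 Y (mem_insert_self Y 𝒴)
    set 𝒜 := {X ∈ A.parts | ¬Disjoint X Y} with h𝒜def
    have h𝒜 : 𝒜 ⊆ A.parts := filter_subset _ _
    have hY𝒜 : Y ⊆ 𝒜.sup id := fun y hy => by
      obtain ⟨X, hX, hyX⟩ := A.exists_mem (hYs hy)
      exact mem_sup.2 ⟨X, mem_filter.2 ⟨hX, not_disjoint_iff.2 ⟨y, hyX, hy⟩⟩, hyX⟩
    have hne : 𝒜.Nonempty := by
      obtain ⟨y, hy⟩ := hYconn.nonempty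
      obtain ⟨X, hX, -⟩ := mem_sup.1 (hY𝒜 hy)
      exact ⟨X, hX⟩
    have hA₁ : IsPotts G (A.merge h𝒜 hne).parts := isPotts_merge hA h𝒜 hne
      (connected_induce_sup_of_not_disjoint hYconn hY𝒜 fun X hX =>
        ⟨hA X (h𝒜 hX), (mem_filter.1 hX).2⟩)
    obtain ⟨J, hJ, hA₁J, hJ𝒴, hcard⟩ :=
      ih (fun Y' hY' => h𝒴 Y' (mem_insert_of_mem hY')) _ hA₁
    refine ⟨J, hJ, (A.le_merge h𝒜 hne).trans hA₁J, ?_, ?_⟩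
    · intro Y' hY'
      rcases mem_insert.1 hY' with rfl | hY'
      · obtain ⟨Z, hZ, h𝒜Z⟩ := hA₁J (show 𝒜.sup id ∈ (A.merge h𝒜 hne).parts by
          simp [Finpartition.parts_merge])
        exact ⟨Z, hZ, hY𝒜.trans h𝒜Z⟩
      · exact hJ𝒴 Y' hY'
    · have hmerge := A.card_merge h𝒜 hne
      have hmono : ∑ Y' ∈ 𝒴, #{X ∈ (A.merge h𝒜 hne).parts | ¬Disjoint X Y'} ≤
          ∑ Y' ∈ 𝒴, #{X ∈ A.parts | ¬Disjoint X Y'} :=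
        sum_le_sum fun Y' _ => Finpartition.card_filter_not_disjoint_le_of_le
          (A.le_merge h𝒜 hne) Y'
      rw [card_insert_of_notMem hY, sum_insert hY, ← h𝒜def]
      omega

theorem exists_common_coarsening (hA : IsPotts G A.parts) (hB : IsPotts G B.parts) :
    ∃ J : Finpartition s, IsPotts G J.parts ∧ A ≤ J ∧ B ≤ J ∧
      #A.parts + #B.parts ≤ #J.parts + #(G.pottsMeet A B).parts := by
  obtain ⟨J, hJ, hAJ, hBJ, hcard⟩ :=
    exists_coarsening B.parts (fun Y hY => ⟨B.le hY, hB Y hY⟩) A hA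
  exact ⟨J, hJ, hAJ, hBJ, hcard.trans (by grw [sum_card_filter_not_disjoint_le_card_pottsMeet])⟩

end PottsPartitions

section InnerEdges

variable {G : SimpleGraph V} [DecidableRel G.Adj] {t : Finset V}

def innerEdges (G : SimpleGraph V) [DecidableRel G.Adj] (Q : Finset (Finset V)) :
    Finset (Sym2 V) :=
  G.edgeFinset.filter fun e => ∃ X ∈ Q, ∀ v ∈ e, v ∈ X

lemma innerEdges_mono {Q R : Finpartition t} (h : Q ≤ R) :
    G.innerEdges Q.parts ⊆ G.innerEdges R.parts := by
  intro e he
  obtain ⟨he, X, hX, hXe⟩ := mem_filter.1 he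
  obtain ⟨Z, hZ, hXZ⟩ := h hX
  exact mem_filter.2 ⟨he, Z, hZ, fun v hv => hXZ (hXe v hv)⟩

lemma innerEdges_inter_subset_pottsMeet {A B : Finpartition t} :
    G.innerEdges A.parts ∩ G.innerEdges B.parts ⊆ G.innerEdges (G.pottsMeet A B).parts := by
  intro e he
  obtain ⟨⟨he, X, hX, hXe⟩, ⟨-, Y, hY, hYe⟩⟩ := And.imp mem_filter.1 mem_filter.1 (mem_inter.1 he)
  induction e using Sym2.ind with
  | _ i j =>
  have hij : {i, j} ⊆ X ∩ Y := by
    simp only [insert_subset_iff, singleton_subset_iff, mem_inter]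
    exact ⟨⟨hXe i (Sym2.mem_mk_left i j), hYe i (Sym2.mem_mk_left i j)⟩,
      hXe j (Sym2.mem_mk_right i j), hYe j (Sym2.mem_mk_right i j)⟩
  have hZ : X ∩ Y ∈ (A.restrict (B.le hY)).parts :=
    mem_erase.2 ⟨ne_empty_of_mem (hij (mem_insert_self i _)), mem_image_of_mem _ hX⟩
  refine mem_filter.2 ⟨he, G.componentIn (X ∩ Y) i, Finpartition.mem_bind.2 ⟨Y, hY,
    Finpartition.mem_bind.2 ⟨X ∩ Y, hZ, mem_image_of_mem _ (hij (mem_insert_self i _))⟩⟩, ?_⟩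
  intro v hv
  refine subset_componentIn hij (mem_insert_self i _) (connected_induce_pair ?_) ?_
  · exact mem_edgeFinset.1 he
  · rcases Sym2.mem_iff.1 hv with rfl | rfl <;> simp

lemma innerEdges_insert_singleton (u : V) (Q : Finset (Finset V)) :
    G.innerEdges (insert {u} Q) = G.innerEdges Q := by
  ext e
  simp only [innerEdges, mem_filter, exists_mem_insert, mem_singleton]
  refine and_congr_right fun he => or_iff_right fun hu => ?_
  induction e using Sym2.ind with
  | _ i j => exact (mem_edgeFinset.1 he).ne ((hu i (Sym2.mem_mk_left i j)).trans
      (hu j (Sym2.mem_mk_right i j)).symm)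

lemma innerEdges_merge {P : Finpartition t} {𝒜 : Finset (Finset V)} (h𝒜 : 𝒜 ⊆ P.parts)
    (hne : 𝒜.Nonempty) :
    G.innerEdges (P.merge h𝒜 hne).parts = G.innerEdges P.parts ∪ crossEdges G 𝒜 := by
  ext e
  induction e using Sym2.ind with
  | _ i j =>
  simp only [innerEdges, crossEdges, Finpartition.parts_merge, mem_union, mem_filter,
    mem_sdiff, mem_singleton, Sym2.mem_iff, forall_eq_or_imp, forall_eq, ← and_or_left]
  refine and_congr_right fun _ => ⟨?_, ?_⟩
  · rintro ⟨X, ⟨hX, -⟩ | rfl, hij⟩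
    · exact Or.inl ⟨X, hX, hij⟩
    obtain ⟨⟨X, hX, hiX⟩, ⟨Y, hY, hjY⟩⟩ := And.imp mem_sup.1 mem_sup.1 hij
    by_cases hXY : X = Y
    · exact Or.inl ⟨X, h𝒜 hX, hiX, hXY ▸ hjY⟩
    · exact Or.inr ⟨X, hX, Y, hY, hXY, i, j, rfl, hiX, hjY⟩
  · rintro (⟨X, hX, hij⟩ | ⟨X, hX, Y, hY, -, i', j', hij', hiX, hjY⟩)
    · by_cases hX𝒜 : X ∈ 𝒜
      · exact ⟨_, Or.inr rfl, hij.imp (le_sup (f := id) hX𝒜 ·) (le_sup (f := id) hX𝒜 ·)⟩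
      · exact ⟨X, Or.inl ⟨hX, hX𝒜⟩, hij⟩
    · refine ⟨_, Or.inr rfl, ?_⟩
      rcases Sym2.eq_iff.1 hij' with ⟨rfl, rfl⟩ | ⟨rfl, rfl⟩
      · exact ⟨le_sup (f := id) hX hiX, le_sup (f := id) hY hjY⟩
      · exact ⟨le_sup (f := id) hY hjY, le_sup (f := id) hX hiX⟩

lemma disjoint_innerEdges_crossEdges {P : Finpartition t} {𝒜 : Finset (Finset V)}
    (h𝒜 : 𝒜 ⊆ P.parts) : Disjoint (G.innerEdges P.parts) (crossEdges G 𝒜) := by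
  refine Finset.disjoint_left.2 fun e he hce => ?_
  obtain ⟨-, Z, hZ, hZe⟩ := mem_filter.1 he
  obtain ⟨-, X, hX, Y, hY, hXY, i, j, rfl, hiX, hjY⟩ := mem_filter.1 hce
  exact hXY ((P.eq_of_mem_parts hZ (h𝒜 hX) (hZe i (Sym2.mem_mk_left i j)) hiX).symm.trans
    (P.eq_of_mem_parts hZ (h𝒜 hY) (hZe j (Sym2.mem_mk_right i j)) hjY))

end InnerEdges

end SimpleGraph

open Finpartition SimpleGraph

section Value

variable {G : SimpleGraph V} [DecidableRel G.Adj] (w : Sym2 V → ℝ) {t : Finset V}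

lemma partitionValue_eq_card_add_sum (Q : Finset (Finset V)) :
    partitionValue G w Q = #Q + ∑ e ∈ G.innerEdges Q, w e := rfl

lemma partitionValue_insert_singleton {u : V} {Q : Finset (Finset V)} (h : {u} ∉ Q) :
    partitionValue G w (insert {u} Q) = partitionValue G w Q + 1 := by
  rw [partitionValue_eq_card_add_sum, partitionValue_eq_card_add_sum, card_insert_of_notMem h,
    innerEdges_insert_singleton]
  push_cast
  ring

lemma partitionValue_merge {P : Finpartition t} {𝒜 : Finset (Finset V)} (h𝒜 : 𝒜 ⊆ P.parts)
    (hne : 𝒜.Nonempty) :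
    partitionValue G w (P.merge h𝒜 hne).parts =
      partitionValue G w P.parts + 1 - #𝒜 + ∑ e ∈ crossEdges G 𝒜, w e := by
  have hcard : (#(P.merge h𝒜 hne).parts : ℝ) + #𝒜 = #P.parts + 1 := by
    exact_mod_cast P.card_merge h𝒜 hne
  rw [partitionValue_eq_card_add_sum, partitionValue_eq_card_add_sum, innerEdges_merge,
    sum_union (disjoint_innerEdges_crossEdges h𝒜)]
  linarith

variable {w}

theorem exists_partitionValue_add_le_add_pottsMeet (hw : ∀ e, 0 ≤ w e) {A B : Finpartition t}
    (hA : IsPotts G A.parts) (hB : IsPotts G B.parts) :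
    ∃ J : Finpartition t, IsPotts G J.parts ∧ B ≤ J ∧
      partitionValue G w A.parts + partitionValue G w B.parts ≤
        partitionValue G w J.parts + partitionValue G w (G.pottsMeet A B).parts := by
  obtain ⟨J, hJ, hAJ, hBJ, hcard⟩ := exists_common_coarsening hA hB
  refine ⟨J, hJ, hBJ, ?_⟩
  have hcard' : (#A.parts : ℝ) + #B.parts ≤ #J.parts + #(G.pottsMeet A B).parts := by
    exact_mod_cast hcard
  have hunion : ∑ e ∈ G.innerEdges A.parts ∪ G.innerEdges B.parts, w e ≤
      ∑ e ∈ G.innerEdges J.parts, w e :=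
    sum_le_sum_of_subset_of_nonneg (union_subset (innerEdges_mono hAJ) (innerEdges_mono hBJ))
      fun e _ _ => hw e
  have hinter : ∑ e ∈ G.innerEdges A.parts ∩ G.innerEdges B.parts, w e ≤
      ∑ e ∈ G.innerEdges (G.pottsMeet A B).parts, w e :=
    sum_le_sum_of_subset_of_nonneg innerEdges_inter_subset_pottsMeet fun e _ _ => hw e
  simp only [partitionValue_eq_card_add_sum]
  linarith [sum_union_inter (s₁ := G.innerEdges A.parts) (s₂ := G.innerEdges B.parts) (f := w)]

lemma partitionValue_le_of_singleton_mem {U : Finset V} {u : V} (hu : u ∉ U)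
    {P : Finpartition U} (hPopt : ∀ Q : Finpartition U, IsPotts G Q.parts →
      partitionValue G w Q.parts ≤ partitionValue G w P.parts)
    {R : Finpartition (insert u U)} (hR : IsPotts G R.parts) (huR : {u} ∈ R.parts) :
    partitionValue G w R.parts ≤ partitionValue G w P.parts + 1 := by
  obtain ⟨Q, hQ⟩ := R.exists_parts_eq_erase_singleton hu huR
  have hRQ : partitionValue G w R.parts = partitionValue G w Q.parts + 1 := by
    rw [hQ, ← partitionValue_insert_singleton w (notMem_erase _ _), insert_erase huR]
  linarith [hPopt Q fun X hX => hR X (mem_of_mem_erase (hQ ▸ hX))]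

end Value

section Connectivity

variable {G : SimpleGraph V} [DecidableRel G.Adj] {w : Sym2 V → ℝ}

lemma sum_crossEdges_le_add (hw : ∀ e, 0 ≤ w e) {𝒲 𝒟 : Finset (Finset V)}
    (h : ∀ X ∈ 𝒟, ∀ Y ∈ 𝒲 \ 𝒟, ∀ i ∈ X, ∀ j ∈ Y, ¬G.Adj i j) :
    ∑ e ∈ crossEdges G 𝒲, w e ≤
      ∑ e ∈ crossEdges G (𝒲 \ 𝒟), w e + ∑ e ∈ crossEdges G 𝒟, w e := by
  have hcross : crossEdges G 𝒲 ⊆ crossEdges G (𝒲 \ 𝒟) ∪ crossEdges G 𝒟 := by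
    intro e he
    obtain ⟨he, X, hX, Y, hY, hXY, i, j, rfl, hiX, hjY⟩ := mem_filter.1 he
    have hadj : G.Adj i j := mem_edgeFinset.1 he
    by_cases hX𝒟 : X ∈ 𝒟 <;> by_cases hY𝒟 : Y ∈ 𝒟
    · exact mem_union_right _ (mem_filter.2 ⟨he, X, hX𝒟, Y, hY𝒟, hXY, i, j, rfl, hiX, hjY⟩)
    · exact absurd hadj (h X hX𝒟 Y (mem_sdiff.2 ⟨hY, hY𝒟⟩) i hiX j hjY)
    · exact absurd hadj.symm (h Y hY𝒟 X (mem_sdiff.2 ⟨hX, hX𝒟⟩) j hjY i hiX)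
    · exact mem_union_left _ (mem_filter.2 ⟨he, X, mem_sdiff.2 ⟨hX, hX𝒟⟩, Y,
        mem_sdiff.2 ⟨hY, hY𝒟⟩, hXY, i, j, rfl, hiX, hjY⟩)
  rw [← sum_union_inter]
  exact le_add_of_le_of_nonneg (sum_le_sum_of_subset_of_nonneg hcross fun e _ _ => hw e)
    (sum_nonneg fun e _ => hw e)

theorem connected_sup_of_minimal (hw : ∀ e, 0 ≤ w e) {U : Finset V} {u : V}
    {P : Finpartition U} (hP : IsPotts G P.parts)
    (hPopt : ∀ Q : Finpartition U, IsPotts G Q.parts →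
      partitionValue G w Q.parts ≤ partitionValue G w P.parts)
    {𝒲 : Finset (Finset V)} (h𝒲 : 𝒲 ⊆ insert {u} P.parts) (hu𝒲 : {u} ∈ 𝒲)
    (hmin : ∀ 𝒲' ⊆ 𝒲, {u} ∈ 𝒲' →
      (#𝒲 : ℝ) - ∑ e ∈ crossEdges G 𝒲, w e ≤ #𝒲' - ∑ e ∈ crossEdges G 𝒲', w e) :
    (G.induce ((𝒲.sup id : Finset V) : Set V)).Connected := by
  set S := 𝒲.sup id
  have hconn : ∀ X ∈ 𝒲, (G.induce (X : Set V)).Connected := fun X hX =>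
    (mem_insert.1 (h𝒲 hX)).elim (· ▸ connected_induce_singleton u) (hP X)
  have huS : u ∈ S := mem_sup.2 ⟨{u}, hu𝒲, mem_singleton_self u⟩
  by_contra hS
  obtain ⟨x, hxS, hxu⟩ : ∃ x ∈ S, x ∉ G.componentIn S u := by
    by_contra! h
    exact hS (subset_antisymm componentIn_subset h ▸ connected_componentIn huS)
  set D := G.componentIn S x
  set 𝒟 := {X ∈ 𝒲 | X ⊆ D}
  have huD : u ∉ D := fun h => hxu (componentIn_eq h ▸ mem_componentIn_self hxS)
  have h𝒟P : 𝒟 ⊆ P.parts := fun X hX => by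
    obtain ⟨hX, hXD⟩ := mem_filter.1 hX
    refine (mem_insert.1 (h𝒲 hX)).resolve_left ?_
    rintro rfl
    exact huD (hXD (mem_singleton_self u))
  have h𝒟sup : 𝒟.sup id = D := sup_filter_subset_componentIn hconn hxS
  have h𝒟ne : 𝒟.Nonempty := by
    have hx𝒟 : x ∈ 𝒟.sup id := h𝒟sup ▸ mem_componentIn_self hxS
    obtain ⟨X, hX, -⟩ := mem_sup.1 hx𝒟
    exact ⟨X, hX⟩
  have hsum := sum_crossEdges_le_add (𝒲 := 𝒲) (𝒟 := 𝒟) hw fun X hX Y hY i hi j hj hij => by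
    obtain ⟨hY, hY𝒟⟩ := mem_sdiff.1 hY
    refine hY𝒟 (mem_filter.2 ⟨hY, subset_componentIn_of_not_disjoint hxS (le_sup (f := id) hY)
      (hconn Y hY) (not_disjoint_iff.2 ⟨j, hj, ?_⟩)⟩)
    exact mem_componentIn_of_adj hxS ((mem_filter.1 hX).2 hi) (le_sup (f := id) hY hj) hij
  have hcard : (#𝒲 : ℝ) = #(𝒲 \ 𝒟) + #𝒟 := by
    exact_mod_cast (card_sdiff_add_card_eq_card (filter_subset _ 𝒲)).symm
  have hu𝒟 : {u} ∈ 𝒲 \ 𝒟 :=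
    mem_sdiff.2 ⟨hu𝒲, fun h => huD ((mem_filter.1 h).2 (mem_singleton_self u))⟩
  have hmerge := hPopt _ (isPotts_merge hP h𝒟P h𝒟ne (h𝒟sup ▸ connected_componentIn hxS))
  rw [partitionValue_merge w h𝒟P h𝒟ne] at hmerge
  linarith [hmin (𝒲 \ 𝒟) sdiff_subset hu𝒟]

end Connectivity

/-- One-step correctness of the Optimal Cooperation Algorithm: let `G` have nonnegative
edge weights, `U ⊆ V`, `u ∉ U`, and let `P` be a Potts partition of the induced subgraph
`G(U)` maximizing `f` over Potts partitions of `G(U)`.  If `𝒲 ⊆ P ∪ {{u}}` contains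
`{u}` and minimizes `|𝒲| - 1 - w(E(𝒲))` over all subsets of `P ∪ {{u}}` containing
`{u}`, then the partition `(P \ 𝒲) ∪ {∪_{X ∈ 𝒲} X}` of `U ∪ {u}` maximizes `f` over
Potts partitions of `G(U ∪ {u})`. -/
theorem optimal_cooperation_step (G : SimpleGraph V) [DecidableRel G.Adj]
    (w : Sym2 V → ℝ) (hw : ∀ e, 0 ≤ w e)
    (U : Finset V) (u : V) (hu : u ∉ U)
    (P : Finpartition U) (hP : IsPotts G P.parts)
    (hPopt : ∀ Q : Finpartition U, IsPotts G Q.parts →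
      partitionValue G w Q.parts ≤ partitionValue G w P.parts)
    (𝒲 : Finset (Finset V)) (h𝒲 : 𝒲 ⊆ insert {u} P.parts)
    (hu𝒲 : ({u} : Finset V) ∈ 𝒲)
    (hmin : ∀ 𝒲' ⊆ insert {u} P.parts, ({u} : Finset V) ∈ 𝒲' →
      (𝒲.card : ℝ) - 1 - ∑ e ∈ crossEdges G 𝒲, w e ≤
        (𝒲'.card : ℝ) - 1 - ∑ e ∈ crossEdges G 𝒲', w e) :
    ∃ Pnew : Finpartition (insert u U),
      Pnew.parts = ((insert {u} P.parts) \ 𝒲) ∪ {𝒲.sup id} ∧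
      IsPotts G Pnew.parts ∧
      ∀ Q : Finpartition (insert u U), IsPotts G Q.parts →
        partitionValue G w Q.parts ≤ partitionValue G w Pnew.parts := by
  let B := P.extend (singleton_ne_empty u) (disjoint_singleton_right.2 hu)
    (by rw [sup_eq_union, union_comm, ← insert_eq])
  have hB : IsPotts G B.parts := fun X hX =>
    (mem_insert.1 hX).elim (· ▸ connected_induce_singleton u) (hP X)
  have hvalB : partitionValue G w B.parts = partitionValue G w P.parts + 1 :=
    partitionValue_insert_singleton w fun h => hu (P.le h (mem_singleton_self u))
  have hne : 𝒲.Nonempty := ⟨{u}, hu𝒲⟩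
  have hconn := connected_sup_of_minimal hw hP hPopt h𝒲 hu𝒲 fun 𝒲' h𝒲' hu𝒲' => by
    linarith [hmin 𝒲' (h𝒲'.trans h𝒲) hu𝒲']
  refine ⟨B.merge h𝒲 hne, rfl, isPotts_merge hB h𝒲 hne hconn, fun Q hQ => ?_⟩
  obtain ⟨J, hJ, hBJ, hsuper⟩ := exists_partitionValue_add_le_add_pottsMeet hw hQ hB
  have hmeet := partitionValue_le_of_singleton_mem hu hPopt (isPotts_pottsMeet (A := Q))
    (singleton_mem_parts_of_le pottsMeet_le_right (show {u} ∈ B.parts from mem_insert_self _ _))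
  have huU : u ∈ insert u U := mem_insert_self u U
  obtain ⟨R, h𝒲', hne', hRJ, hRJeq⟩ := exists_merge_eq_of_le hBJ (J.part_mem.2 huU)
  have hu𝒲' : {u} ∈ {Y ∈ B.parts | Y ⊆ J.part u} :=
    mem_filter.2 ⟨mem_insert_self _ _, singleton_subset_iff.2 (J.mem_part_self.2 huU)⟩
  have hR := partitionValue_le_of_singleton_mem hu hPopt
    (fun X hX => (mem_union.1 (hRJ hX)).elim (hJ X) (hB X)) (h𝒲' hu𝒲')
  have hvalJ := partitionValue_merge (G := G) w h𝒲' hne'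
  rw [hRJeq] at hvalJ
  rw [partitionValue_merge w h𝒲 hne]
  linarith [hmin {Y ∈ B.parts | Y ⊆ J.part u} (filter_subset _ _) hu𝒲']
end
end
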